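/- arXiv:2402.08792 — 5 statements merged into one kernel-verified Lean document; each statement's English description precedes it below -/
import Mathlib

section
/- Suppose P is symmetric and ρ₁ = ∫ (1 − e^{−x²/2}) dP(x) > 0, and define ψ₁(y) = ρ₁^{−1} φ(y) ∫ (cosh(x·y) − 1) e^{−x²/2} dP(x). Then ψ₁(y) ≥ 0 for all y, ψ₁(0) = 0, ∫_ℝ ψ₁(y) dy = 1, and m(y) = (1 − ρ₁) φ(y) + ρ₁ ψ₁(y) for every y ∈ ℝ. Thus ψ₁ is a probability density giving a two-groups decomposition of m that satisfies the zero density assumption. -/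
open MeasureTheory Real

/-- The standard normal density. -/
noncomputable def phi (t : ℝ) : ℝ := (Real.sqrt (2 * Real.pi))⁻¹ * Real.exp (-(t ^ 2) / 2)

/-- The marginal density of `Y` in the signal-plus-noise model. -/
noncomputable def marginal (P : Measure ℝ) (y : ℝ) : ℝ := ∫ x, phi (y - x) ∂P

/-- The sparsity rate `ρ₁ = ∫ (1 - e^{-x²/2}) dP(x)`. -/
noncomputable def sparsityRate (P : Measure ℝ) : ℝ := ∫ x, (1 - Real.exp (-(x ^ 2) / 2)) ∂P

lemma phi_nonneg (t : ℝ) : 0 ≤ phi t := by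
  unfold phi
  positivity

lemma phi_continuous : Continuous phi := by
  unfold phi
  fun_prop

lemma phi_integrable : Integrable phi := by
  have h : phi = fun t => (Real.sqrt (2 * Real.pi))⁻¹ * Real.exp (-(1/2 : ℝ) * t ^ 2) := by
    funext t; unfold phi; ring_nf
  rw [h]
  exact (integrable_exp_neg_mul_sq (by norm_num)).const_mul _

lemma phi_integral : ∫ t, phi t = 1 := by
  have h : ∀ t : ℝ, phi t = (Real.sqrt (2 * Real.pi))⁻¹ * Real.exp (-(1/2 : ℝ) * t ^ 2) := by
    intro t; unfold phi; ring_nf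
  simp only [h]
  rw [integral_const_mul, integral_gaussian]
  have : Real.pi / (1/2 : ℝ) = 2 * Real.pi := by ring
  rw [this, inv_mul_cancel₀]
  positivity

lemma phi_shift (x y : ℝ) : phi (y - x) = phi y * Real.exp (x * y - x ^ 2 / 2) := by
  unfold phi
  rw [mul_assoc, ← Real.exp_add]
  congr 1
  ring

section main
variable (P : Measure ℝ) [IsProbabilityMeasure P]

lemma int_exp (y : ℝ) : Integrable (fun x => Real.exp (x * y - x ^ 2 / 2)) P := by
  refine (integrable_const (Real.exp (y ^ 2 / 2))).mono' ?_ (ae_of_all _ fun x => ?_)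
  · exact (Real.continuous_exp.comp (by fun_prop)).aestronglyMeasurable
  · rw [Real.norm_eq_abs, abs_of_nonneg (Real.exp_nonneg _)]
    exact Real.exp_le_exp.2 (by nlinarith [sq_nonneg (x - y)])

lemma int_exp' (y : ℝ) : Integrable (fun x => Real.exp (-(x * y) - x ^ 2 / 2)) P := by
  have := int_exp P (-y)
  simpa [mul_comm, mul_neg, neg_mul] using this

lemma int_coshexp (y : ℝ) : Integrable (fun x => Real.cosh (x * y) * Real.exp (-(x ^ 2) / 2)) P := by
  have h : (fun x => Real.cosh (x * y) * Real.exp (-(x ^ 2) / 2)) =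
      fun x => (Real.exp (x * y - x ^ 2 / 2) + Real.exp (-(x * y) - x ^ 2 / 2)) / 2 := by
    funext x
    have e1 : Real.exp (x * y - x ^ 2 / 2) = Real.exp (x * y) * Real.exp (-(x ^ 2) / 2) := by
      rw [← Real.exp_add]; ring_nf
    have e2 : Real.exp (-(x * y) - x ^ 2 / 2) = Real.exp (-(x * y)) * Real.exp (-(x ^ 2) / 2) := by
      rw [← Real.exp_add]; ring_nf
    rw [Real.cosh_eq, e1, e2]; ring
  rw [h]
  exact ((int_exp P y).add (int_exp' P y)).div_const 2

lemma int_e (s : Measure ℝ) [IsProbabilityMeasure s] :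
    Integrable (fun x => Real.exp (-(x ^ 2) / 2)) s := by
  refine (integrable_const (1 : ℝ)).mono'
    ((Real.continuous_exp.comp (by fun_prop)).aestronglyMeasurable) (ae_of_all _ fun x => ?_)
  rw [Real.norm_eq_abs, abs_of_nonneg (Real.exp_nonneg _)]
  exact Real.exp_le_one_iff.2 (by nlinarith [sq_nonneg x])

lemma sparsity_eq : sparsityRate P = 1 - ∫ x, Real.exp (-(x ^ 2) / 2) ∂P := by
  unfold sparsityRate
  rw [integral_sub (integrable_const 1) (int_e P)]
  simp

lemma marginal_eq (hsymm : Measure.map (fun x : ℝ => -x) P = P) (y : ℝ) :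
    marginal P y = phi y * ∫ x, Real.cosh (x * y) * Real.exp (-(x ^ 2) / 2) ∂P := by
  have h1 : marginal P y = phi y * ∫ x, Real.exp (x * y - x ^ 2 / 2) ∂P := by
    unfold marginal
    simp only [phi_shift]
    rw [integral_const_mul]
  have hc : Continuous fun x : ℝ => Real.exp (x * y - x ^ 2 / 2) :=
    Real.continuous_exp.comp (by fun_prop)
  have hmap : ∫ x, Real.exp (x * y - x ^ 2 / 2) ∂P = ∫ x, Real.exp (-(x * y) - x ^ 2 / 2) ∂P := by
    have h0 : ∫ x, Real.exp (x * y - x ^ 2 / 2) ∂(Measure.map (fun x : ℝ => -x) P)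
        = ∫ x, Real.exp ((-x) * y - (-x) ^ 2 / 2) ∂P :=
      integral_map measurable_neg.aemeasurable hc.aestronglyMeasurable
    rw [hsymm] at h0
    rw [h0]
    congr 1
    funext x
    congr 1
    ring
  have h2 : ∫ x, Real.cosh (x * y) * Real.exp (-(x ^ 2) / 2) ∂P
      = ∫ x, Real.exp (x * y - x ^ 2 / 2) ∂P := by
    have h : (fun x => Real.cosh (x * y) * Real.exp (-(x ^ 2) / 2)) =
        fun x => (Real.exp (x * y - x ^ 2 / 2) + Real.exp (-(x * y) - x ^ 2 / 2)) / 2 := by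
      funext x
      have e1 : Real.exp (x * y - x ^ 2 / 2) = Real.exp (x * y) * Real.exp (-(x ^ 2) / 2) := by
        rw [← Real.exp_add]; ring_nf
      have e2 : Real.exp (-(x * y) - x ^ 2 / 2) = Real.exp (-(x * y)) * Real.exp (-(x ^ 2) / 2) := by
        rw [← Real.exp_add]; ring_nf
      rw [Real.cosh_eq, e1, e2]; ring
    rw [h]
    rw [integral_div, integral_add (int_exp P y) (int_exp' P y), ← hmap]
    ring
  rw [h1, h2]

omit [IsProbabilityMeasure P] in
lemma marginal_nonneg (y : ℝ) : 0 ≤ marginal P y :=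
  integral_nonneg fun _ => phi_nonneg _

lemma marginal_integrable : Integrable (marginal P) ∧ ∫ y, marginal P y = 1 := by
  have hsm : StronglyMeasurable (fun p : ℝ × ℝ => phi (p.1 - p.2)) :=
    (phi_continuous.comp (continuous_fst.sub continuous_snd)).stronglyMeasurable
  have hmm : StronglyMeasurable (marginal P) := hsm.integral_prod_right'
  have hintx : ∀ y : ℝ, Integrable (fun x => phi (y - x)) P := by
    intro y
    simp only [phi_shift]
    exact (int_exp P y).const_mul _
  have hl : ∀ y : ℝ, ∫⁻ x, ENNReal.ofReal (phi (y - x)) ∂P = ENNReal.ofReal (marginal P y) := by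
    intro y
    rw [← ofReal_integral_eq_lintegral_ofReal (hintx y) (ae_of_all _ fun x => phi_nonneg _)]
    rfl
  have key : ∫⁻ y, ENNReal.ofReal (marginal P y) = 1 := by
    have hmeas : AEMeasurable (Function.uncurry fun y x => ENNReal.ofReal (phi (y - x)))
        ((volume : Measure ℝ).prod P) := by
      apply Measurable.aemeasurable
      apply Measurable.ennreal_ofReal
      exact (phi_continuous.comp (continuous_fst.sub continuous_snd)).measurable
    have hswap := lintegral_lintegral_swap (μ := (volume : Measure ℝ)) (ν := P)
      (f := fun y x => ENNReal.ofReal (phi (y - x))) hmeas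
    calc ∫⁻ y, ENNReal.ofReal (marginal P y)
        = ∫⁻ y, ∫⁻ x, ENNReal.ofReal (phi (y - x)) ∂P := lintegral_congr fun y => (hl y).symm
      _ = ∫⁻ x, (∫⁻ y, ENNReal.ofReal (phi (y - x)) ∂(volume : Measure ℝ)) ∂P := by
          simpa using hswap
      _ = ∫⁻ x, (1 : ENNReal) ∂P := by
          refine lintegral_congr fun x => ?_
          rw [← ofReal_integral_eq_lintegral_ofReal (phi_integrable.comp_sub_right x)
            (ae_of_all _ fun y => phi_nonneg _), integral_sub_right_eq_self phi x, phi_integral]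
          exact ENNReal.ofReal_one
      _ = 1 := by simp
  have hint : Integrable (marginal P) := by
    refine ⟨hmm.aestronglyMeasurable, ?_⟩
    rw [hasFiniteIntegral_iff_ofReal (ae_of_all _ (marginal_nonneg P))]
    rw [key]
    exact ENNReal.one_lt_top
  refine ⟨hint, ?_⟩
  rw [integral_eq_lintegral_of_nonneg_ae (ae_of_all _ (marginal_nonneg P)) hmm.aestronglyMeasurable,
    key]
  simp

end main

/-- For symmetric `P` with `ρ₁ > 0`, the active component
`ψ₁(y) = ρ₁⁻¹ φ(y) ∫ (cosh(x y) - 1) e^{-x²/2} dP(x)` is a probability density vanishing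
at zero, and `m(y) = (1 - ρ₁) φ(y) + ρ₁ ψ₁(y)` for every `y`. -/
theorem stmt2 (P : Measure ℝ) [IsProbabilityMeasure P]
    (hsymm : Measure.map (fun x : ℝ => -x) P = P)
    (hρ : 0 < sparsityRate P)
    (ψ₁ : ℝ → ℝ)
    (hψ₁ : ∀ y, ψ₁ y = (sparsityRate P)⁻¹ * phi y *
      ∫ x, (Real.cosh (x * y) - 1) * Real.exp (-(x ^ 2) / 2) ∂P) :
    (∀ y, 0 ≤ ψ₁ y) ∧ ψ₁ 0 = 0 ∧ (∫ y : ℝ, ψ₁ y) = 1 ∧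
    ∀ y, marginal P y = (1 - sparsityRate P) * phi y + sparsityRate P * ψ₁ y := by
  set ρ := sparsityRate P with hρdef
  have hρne : ρ ≠ 0 := ne_of_gt hρ
  have hnonneg : ∀ y, 0 ≤ ψ₁ y := by
    intro y
    rw [hψ₁ y]
    apply mul_nonneg
    · exact mul_nonneg (inv_nonneg.2 hρ.le) (phi_nonneg y)
    · refine integral_nonneg fun x => ?_
      exact mul_nonneg (by linarith [Real.one_le_cosh (x * y)]) (Real.exp_nonneg _)
  have hzero : ψ₁ 0 = 0 := by
    rw [hψ₁ 0]
    simp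
  have hint_diff : ∀ y : ℝ, Integrable
      (fun x => (Real.cosh (x * y) - 1) * Real.exp (-(x ^ 2) / 2)) P := by
    intro y
    have h : (fun x => (Real.cosh (x * y) - 1) * Real.exp (-(x ^ 2) / 2)) =
        fun x => Real.cosh (x * y) * Real.exp (-(x ^ 2) / 2) - Real.exp (-(x ^ 2) / 2) := by
      funext x; ring
    rw [h]
    exact (int_coshexp P y).sub (int_e P)
  have hdecomp : ∀ y, marginal P y = (1 - ρ) * phi y + ρ * ψ₁ y := by
    intro y
    rw [hψ₁ y, marginal_eq P hsymm y]
    have hsplit : ∫ x, Real.cosh (x * y) * Real.exp (-(x ^ 2) / 2) ∂P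
        = (∫ x, (Real.cosh (x * y) - 1) * Real.exp (-(x ^ 2) / 2) ∂P)
          + ∫ x, Real.exp (-(x ^ 2) / 2) ∂P := by
      rw [← integral_add (hint_diff y) (int_e P)]
      congr 1; funext x; ring
    have hsp : ∫ x, Real.exp (-(x ^ 2) / 2) ∂P = 1 - ρ := by
      rw [hρdef, sparsity_eq]; ring
    rw [hsplit, hsp]
    rw [show ρ * (ρ⁻¹ * phi y * ∫ x, (Real.cosh (x * y) - 1) * Real.exp (-(x ^ 2) / 2) ∂P) = phi y * ∫ x, (Real.cosh (x * y) - 1) * Real.exp (-(x ^ 2) / 2) ∂P by rw [← mul_assoc, ← mul_assoc, mul_inv_cancel₀ hρne, one_mul]]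
    ring
  have hpsi_eq : ∀ y, ψ₁ y = ρ⁻¹ * (marginal P y - (1 - ρ) * phi y) := by
    intro y
    rw [hdecomp y]
    field_simp
    ring
  have hintegral : (∫ y : ℝ, ψ₁ y) = 1 := by
    obtain ⟨hmint, hmval⟩ := marginal_integrable P
    calc (∫ y : ℝ, ψ₁ y) = ∫ y : ℝ, ρ⁻¹ * (marginal P y - (1 - ρ) * phi y) := by
          congr 1; funext y; exact hpsi_eq y
      _ = ρ⁻¹ * ((∫ y, marginal P y) - (1 - ρ) * ∫ y, phi y) := by
          rw [integral_const_mul, integral_sub hmint (phi_integrable.const_mul _),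
            integral_const_mul]
      _ = 1 := by rw [hmval, phi_integral]; field_simp; ring
  exact ⟨hnonneg, hzero, hintegral, hdecomp⟩
end

section
/- Let P be any Borel probability measure on ℝ with ρ₁ > 0, and let η₁ satisfy 0 < η₁ < ρ₁. Define f₁(y) = (m(y) − (1 − η₁) φ(y)) / η₁, which is the only function satisfying (1 − η₁)φ + η₁ f₁ = m pointwise. Then f₁(0) < 0; hence no two-groups decomposition of m with mixing weight η₁ < ρ₁ and a nonnegative non-null component exists. -/
open MeasureTheory Real

/-! Since `φ(0 - x) = φ(0) e^{-x²/2}`, the marginal density at the origin is `m(0) = φ(0) (1 - ρ₁)`,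
so `η₁ f₁(0) = m(0) - (1 - η₁) φ(0) = φ(0) (η₁ - ρ₁)`, which is negative whenever `η₁ < ρ₁`. -/

lemma phi_zero_pos : 0 < phi 0 := by
  simp only [phi]
  positivity

lemma phi_eq_phi_zero_mul (t : ℝ) : phi t = phi 0 * exp (-(t ^ 2) / 2) := by
  simp [phi]

lemma integrable_exp_neg_sq_div_two (P : Measure ℝ) [IsFiniteMeasure P] :
    Integrable (fun x : ℝ => exp (-(x ^ 2) / 2)) P :=
  Integrable.of_bound (by fun_prop) 1 <| .of_forall fun x => by
    rw [norm_of_nonneg (exp_pos _).le, exp_le_one_iff]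
    nlinarith [sq_nonneg x]

lemma marginal_zero (P : Measure ℝ) [IsProbabilityMeasure P] :
    marginal P 0 = phi 0 * (1 - sparsityRate P) := by
  have hint := integrable_exp_neg_sq_div_two P
  simp only [marginal, sparsityRate, zero_sub, phi_eq_phi_zero_mul (-_), neg_sq]
  rw [integral_const_mul, integral_sub (integrable_const 1) hint]
  simp

theorem stmt4_general (P : Measure ℝ) [IsProbabilityMeasure P]
    (η₁ : ℝ) (hη₁ : 0 < η₁) (hη₂ : η₁ < sparsityRate P)
    (f₁ : ℝ → ℝ) (hf₁ : ∀ y, f₁ y = (marginal P y - (1 - η₁) * phi y) / η₁) :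
    f₁ 0 < 0 := by
  have hnum : marginal P 0 - (1 - η₁) * phi 0 = phi 0 * (η₁ - sparsityRate P) := by
    rw [marginal_zero]
    ring
  rw [hf₁, hnum]
  exact div_neg_of_neg_of_pos (mul_neg_of_pos_of_neg phi_zero_pos (by linarith)) hη₁

/-- If `0 < η₁ < ρ₁`, the unique function `f₁` with
`(1 - η₁) φ + η₁ f₁ = m` satisfies `f₁(0) < 0`, so no two-groups decomposition with mixing
weight `η₁ < ρ₁` and a nonnegative non-null component exists. -/
theorem stmt4 (P : Measure ℝ) [IsProbabilityMeasure P]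
    (hρ : 0 < sparsityRate P)
    (η₁ : ℝ) (hη₁ : 0 < η₁) (hη₂ : η₁ < sparsityRate P)
    (f₁ : ℝ → ℝ) (hf₁ : ∀ y, f₁ y = (marginal P y - (1 - η₁) * phi y) / η₁) :
    f₁ 0 < 0 :=
  stmt4_general P η₁ hη₁ hη₂ f₁ hf₁
end

section
/- (Proposition 2, uniqueness.) Let P be symmetric with ρ₁ > 0. Suppose η₁ ∈ [0,1] and f₁ : ℝ → ℝ is Borel measurable with f₁ ≥ 0, ∫_ℝ f₁(y) dy = 1, (1 − η₁) φ(y) + η₁ f₁(y) = m(y) for every y ∈ ℝ, and f₁(0) = 0. Then η₁ = ρ₁. That is, among all two-groups decompositions of m, the weight ρ₁ is the unique one whose non-null component density vanishes at zero (zero density assumption). -/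
open MeasureTheory Real

/-- Proposition 2, uniqueness: for symmetric `P` with `ρ₁ > 0`, the only
two-groups decomposition of `m` whose non-null density vanishes at `0` has weight `ρ₁`. -/
theorem stmt5 (P : Measure ℝ) [IsProbabilityMeasure P]
    (hsymm : Measure.map (fun x : ℝ => -x) P = P)
    (hρ : 0 < sparsityRate P)
    (η₁ : ℝ) (hη : η₁ ∈ Set.Icc (0 : ℝ) 1)
    (f₁ : ℝ → ℝ) (hmeas : Measurable f₁) (hnonneg : ∀ y, 0 ≤ f₁ y)
    (hint : (∫ y : ℝ, f₁ y) = 1)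
    (hdecomp : ∀ y, (1 - η₁) * phi y + η₁ * f₁ y = marginal P y)
    (hzero : f₁ 0 = 0) :
    η₁ = sparsityRate P := by
  have hi : Integrable (fun x : ℝ => Real.exp (-(x ^ 2) / 2)) P := by
    apply (integrable_const (1 : ℝ)).mono'
    · exact (Real.measurable_exp.comp ((measurable_id.pow_const 2).neg.div_const 2)).aestronglyMeasurable
    · filter_upwards with x
      rw [Real.norm_eq_abs, abs_of_pos (Real.exp_pos _)]
      exact Real.exp_le_one_iff.2 (by nlinarith [sq_nonneg x])
  have hρeq : sparsityRate P = 1 - ∫ x, Real.exp (-(x ^ 2) / 2) ∂P := by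
    rw [sparsityRate, integral_sub (integrable_const 1) hi, integral_const]
    simp
  have h0 := hdecomp 0
  have hm0 : marginal P 0 = (Real.sqrt (2 * Real.pi))⁻¹ * ∫ x, Real.exp (-(x ^ 2) / 2) ∂P := by
    rw [marginal, ← integral_const_mul]
    congr 1 with x
    simp [phi]
  rw [hzero, hm0] at h0
  have hphi0 : phi 0 = (Real.sqrt (2 * Real.pi))⁻¹ := by simp [phi]
  rw [hphi0, mul_zero, add_zero] at h0
  have hc : (Real.sqrt (2 * Real.pi))⁻¹ ≠ 0 := by positivity
  have : 1 - η₁ = ∫ x, Real.exp (-(x ^ 2) / 2) ∂P := by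
    field_simp at h0
    rw [h0]; simp only [neg_div]
  linarith [hρeq, this]
end

section
/- (Hyperbolic secant identity, Proposition 3.) If P is symmetric, then for every y ∈ ℝ, ∫ sech(x·y) φ(y − x) dP(x) = (1 − ρ₁) φ(y). Equivalently, whenever m(y) > 0, the complementary local activity rate clar(y) = (1 − ρ₁)φ(y)/m(y) equals the posterior expectation E[sech(XY) | Y = y] = (1/m(y)) ∫ sech(x·y) φ(y − x) dP(x). -/
open MeasureTheory Real

lemma phi_le (t : ℝ) : phi t ≤ (Real.sqrt (2 * Real.pi))⁻¹ := by
  unfold phi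
  have h1 : Real.exp (-(t ^ 2) / 2) ≤ 1 := by
    rw [Real.exp_le_one_iff]; nlinarith [sq_nonneg t]
  have h2 : (0:ℝ) ≤ (Real.sqrt (2 * Real.pi))⁻¹ := by positivity
  nlinarith

lemma key (x y : ℝ) :
    (Real.cosh (x * y))⁻¹ * phi (y - x) + (Real.cosh (-x * y))⁻¹ * phi (y - -x)
      = 2 * (Real.exp (-(x ^ 2) / 2) * phi y) := by
  have hc : Real.cosh (x * y) > 0 := Real.cosh_pos _
  have hcn : Real.cosh (-x * y) = Real.cosh (x * y) := by
    rw [neg_mul, Real.cosh_neg]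
  rw [hcn]
  unfold phi
  have e1 : Real.exp (-((y - x) ^ 2) / 2)
      = Real.exp (-(x ^ 2) / 2) * Real.exp (-(y ^ 2) / 2) * Real.exp (x * y) := by
    rw [← Real.exp_add, ← Real.exp_add]; ring_nf
  have e2 : Real.exp (-((y - -x) ^ 2) / 2)
      = Real.exp (-(x ^ 2) / 2) * Real.exp (-(y ^ 2) / 2) * Real.exp (-(x * y)) := by
    rw [← Real.exp_add, ← Real.exp_add]; ring_nf
  rw [e1, e2, Real.cosh_eq]
  have hs : Real.exp (x * y) + Real.exp (-(x * y)) > 0 := by positivity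
  field_simp

/-- hyperbolic secant identity: if `P` is symmetric then for every `y`,
`∫ sech(x y) φ(y - x) dP(x) = (1 - ρ₁) φ(y)`; equivalently, whenever `m(y) > 0`,
`clar(y) = (1 - ρ₁)φ(y)/m(y)` equals the posterior expectation `E[sech(XY) | Y = y]`. -/
theorem stmt6 (P : Measure ℝ) [IsProbabilityMeasure P]
    (hsymm : Measure.map (fun x : ℝ => -x) P = P) :
    (∀ y : ℝ, ∫ x, (Real.cosh (x * y))⁻¹ * phi (y - x) ∂P = (1 - sparsityRate P) * phi y) ∧
    (∀ y : ℝ, 0 < marginal P y →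
      (1 - sparsityRate P) * phi y / marginal P y =
        (∫ x, (Real.cosh (x * y))⁻¹ * phi (y - x) ∂P) / marginal P y) := by
  have hg : Integrable (fun x : ℝ => Real.exp (-(x ^ 2) / 2)) P := by
    apply (integrable_const (1:ℝ)).mono'
    · exact (Real.continuous_exp.comp (by continuity)).aestronglyMeasurable
    · filter_upwards with x
      rw [Real.norm_eq_abs, abs_of_nonneg (Real.exp_pos _).le, Real.exp_le_one_iff]
      nlinarith [sq_nonneg x]
  have hsr : 1 - sparsityRate P = ∫ x, Real.exp (-(x ^ 2) / 2) ∂P := by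
    unfold sparsityRate
    rw [integral_sub (integrable_const 1) hg, integral_const]
    simp
  have main : ∀ y : ℝ,
      ∫ x, (Real.cosh (x * y))⁻¹ * phi (y - x) ∂P = (1 - sparsityRate P) * phi y := by
    intro y
    set f : ℝ → ℝ := fun x => (Real.cosh (x * y))⁻¹ * phi (y - x) with hf
    have hcont : Continuous f := by
      apply Continuous.mul
      · exact ((Real.continuous_cosh.comp (continuous_id.mul continuous_const)).inv₀
          fun x => (Real.cosh_pos _).ne')
      · unfold phi
        continuity
    have hint : Integrable f P := by
      apply (integrable_const ((Real.sqrt (2 * Real.pi))⁻¹)).mono'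
        hcont.aestronglyMeasurable
      filter_upwards with x
      rw [Real.norm_eq_abs, hf]
      have h1 : (Real.cosh (x * y))⁻¹ ≤ 1 := by
        rw [inv_le_one_iff₀]; right; exact Real.one_le_cosh _
      have h2 : 0 ≤ (Real.cosh (x * y))⁻¹ := by positivity
      rw [abs_of_nonneg (mul_nonneg h2 (phi_nonneg _))]
      calc (Real.cosh (x * y))⁻¹ * phi (y - x) ≤ 1 * phi (y - x) := by
            exact mul_le_mul_of_nonneg_right h1 (phi_nonneg _)
        _ ≤ (Real.sqrt (2 * Real.pi))⁻¹ := by rw [one_mul]; exact phi_le _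
    have hintn : Integrable (fun x => f (-x)) P := by
      rw [← hsymm] at hint
      exact (integrable_map_measure hcont.aestronglyMeasurable
        measurable_neg.aemeasurable).mp hint
    have hsym : ∫ x, f x ∂P = ∫ x, f (-x) ∂P := by
      conv_lhs => rw [← hsymm]
      rw [integral_map measurable_neg.aemeasurable hcont.aestronglyMeasurable]
    have h2 : (2:ℝ) * ∫ x, f x ∂P = 2 * ((1 - sparsityRate P) * phi y) := by
      have : (2:ℝ) * ∫ x, f x ∂P = ∫ x, (f x + f (-x)) ∂P := by
        rw [integral_add hint hintn, ← hsym, two_mul]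
      rw [this]
      have heq : ∀ x, f x + f (-x) = 2 * (Real.exp (-(x ^ 2) / 2) * phi y) := by
        intro x
        have := key x y
        simp only [hf, neg_mul] at this ⊢
        convert this using 3 <;> ring
      simp only [heq]
      rw [integral_const_mul, integral_mul_const, hsr]
    linarith
  exact ⟨main, fun y _ => by rw [main y]⟩
end

section
/- For any Borel probability measure P on ℝ and every y ∈ ℝ, ∫ 1{x·y ≤ 0} φ(y − x) dP(x) ≤ (1 − ρ₁) φ(y). Equivalently, whenever m(y) > 0, the posterior probability P(XY ≤ 0 | Y = y) is at most the complementary local activity rate clar(y) = (1 − ρ₁)φ(y)/m(y). -/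
open MeasureTheory Real

lemma phi_sub_le_of_mul_nonpos {x y : ℝ} (h : x * y ≤ 0) :
    phi (y - x) ≤ phi y * exp (-(x ^ 2) / 2) := by
  unfold phi
  rw [mul_assoc, ← exp_add]
  gcongr
  nlinarith [sq_nonneg (y - x)]

lemma exp_neg_sq_div_two_le_one (x : ℝ) : exp (-(x ^ 2) / 2) ≤ 1 :=
  exp_le_one_iff.mpr (by nlinarith [sq_nonneg x])

lemma integrable_phi_sub (P : Measure ℝ) [IsFiniteMeasure P] (y : ℝ) :
    Integrable (fun x : ℝ => phi (y - x)) P :=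
  Integrable.of_bound (by unfold phi; fun_prop) (sqrt (2 * π))⁻¹ <| ae_of_all _ fun x => by
    rw [norm_of_nonneg (phi_nonneg _)]
    unfold phi
    exact mul_le_of_le_one_right (by positivity) (exp_neg_sq_div_two_le_one _)

lemma one_sub_sparsityRate (P : Measure ℝ) [IsProbabilityMeasure P] :
    1 - sparsityRate P = ∫ x, exp (-(x ^ 2) / 2) ∂P := by
  rw [sparsityRate, integral_sub (integrable_const 1) (integrable_exp_neg_sq_div_two P),
    integral_const, probReal_univ, one_smul, sub_sub_cancel]

lemma setIntegral_phi_sub_mul_nonpos_le (P : Measure ℝ) [IsFiniteMeasure P] (y : ℝ) :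
    ∫ x in {x : ℝ | x * y ≤ 0}, phi (y - x) ∂P ≤ phi y * ∫ x, exp (-(x ^ 2) / 2) ∂P :=
  calc ∫ x in {x : ℝ | x * y ≤ 0}, phi (y - x) ∂P
      ≤ ∫ x in {x : ℝ | x * y ≤ 0}, phi y * exp (-(x ^ 2) / 2) ∂P :=
        setIntegral_mono_on (integrable_phi_sub P y).integrableOn
          ((integrable_exp_neg_sq_div_two P).const_mul _).integrableOn
          (measurableSet_le (by fun_prop) measurable_const)
          fun _ hx => phi_sub_le_of_mul_nonpos hx
    _ = phi y * ∫ x in {x : ℝ | x * y ≤ 0}, exp (-(x ^ 2) / 2) ∂P := integral_const_mul _ _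
    _ ≤ phi y * ∫ x, exp (-(x ^ 2) / 2) ∂P :=
        mul_le_mul_of_nonneg_left
          (setIntegral_le_integral (integrable_exp_neg_sq_div_two P)
            (ae_of_all _ fun _ => (exp_pos _).le))
          (phi_nonneg y)

/-- for any Borel probability measure `P` and every `y`,
`∫_{ {x : x y ≤ 0} } φ(y - x) dP(x) ≤ (1 - ρ₁) φ(y)`; equivalently, whenever `m(y) > 0`,
the posterior probability `P(XY ≤ 0 | Y = y)` is at most `clar(y) = (1 - ρ₁)φ(y)/m(y)`. -/
theorem stmt8 (P : Measure ℝ) [IsProbabilityMeasure P] :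
    (∀ y : ℝ, (∫ x in {x : ℝ | x * y ≤ 0}, phi (y - x) ∂P) ≤ (1 - sparsityRate P) * phi y) ∧
    (∀ y : ℝ, 0 < marginal P y →
      (∫ x in {x : ℝ | x * y ≤ 0}, phi (y - x) ∂P) / marginal P y ≤
        (1 - sparsityRate P) * phi y / marginal P y) := by
  have bound : ∀ y : ℝ, (∫ x in {x : ℝ | x * y ≤ 0}, phi (y - x) ∂P) ≤
      (1 - sparsityRate P) * phi y := fun y => by
    rw [one_sub_sparsityRate, mul_comm]
    exact setIntegral_phi_sub_mul_nonpos_le P y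
  exact ⟨bound, fun y hm => div_le_div_of_nonneg_right (bound y) hm.le⟩
end
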